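/- arXiv:2512.24694 — 2 statements merged into one kernel-verified Lean document; each statement's English description precedes it below -/
import Mathlib

section
/- Let f_1,…,f_N : ℝ^d → ℝ be convex and L-smooth (L > 0), let f = (1/N)Σ_i f_i, and let x* be a global minimizer of f. Then for any points x_1,…,x_N ∈ ℝ^d with x̄ = (1/N)Σ_i x_i, one has ‖(1/N)Σ_i ∇f_i(x_i)‖² ≤ (2L²/N)·Σ_i ‖x_i − x̄‖² + 4L·(f(x̄) − f(x*)). -/
/-!
Integrating the gradient along a segment shows that an `L`-smooth function lies below the quadratic
`h x + ⟪∇h x, y - x⟫ + L/2 ‖y - x‖²`; minimizing this quadratic over `y` gives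
`‖∇h x‖² ≤ 2L (h x - min h)`. Applied to the average `f`, which is again `L`-smooth, at `x̄`, this
bounds `‖∇f(x̄)‖²`. The difference between `∇f(x̄)` and the average of the `∇f_i(x_i)` is an average
of vectors of norms `≤ L ‖x_i - x̄‖`, so its square is at most `(L²/N) Σ ‖x_i - x̄‖²`, and
`‖a + b‖² ≤ 2‖a‖² + 2‖b‖²` combines the two bounds.
-/

open Finset Set

variable {E : Type*} [NormedAddCommGroup E] [InnerProductSpace ℝ E] [CompleteSpace E]

theorem HasGradientAt.const_mul {h : E → ℝ} {g x : E} (hh : HasGradientAt h g x) (c : ℝ) :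
    HasGradientAt (fun z => c * h z) (c • g) x := by
  rw [hasGradientAt_iff_hasFDerivAt, map_smul]
  exact hh.hasFDerivAt.const_mul c

theorem HasGradientAt.sum {ι : Type*} {s : Finset ι} {h : ι → E → ℝ} {g : ι → E} {x : E}
    (hh : ∀ i ∈ s, HasGradientAt (h i) (g i) x) :
    HasGradientAt (fun z => ∑ i ∈ s, h i z) (∑ i ∈ s, g i) x := by
  rw [hasGradientAt_iff_hasFDerivAt, map_sum]
  exact HasFDerivAt.fun_sum fun i hi => (hh i hi).hasFDerivAt

theorem HasGradientAt.hasDerivAt_comp_add_smul {h : E → ℝ} {g x v : E} {t : ℝ}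
    (hh : HasGradientAt h g (x + t • v)) :
    HasDerivAt (fun t : ℝ => h (x + t • v)) (inner ℝ g v) t := by
  have hline : HasDerivAt (fun t : ℝ => x + t • v) v t := by
    simpa using ((hasDerivAt_id t).smul_const v).const_add x
  exact hh.hasFDerivAt.comp_hasDerivAt t hline

theorem le_add_inner_add_sq_of_lipschitz_gradient {h : E → ℝ} {g : E → E}
    (hg : ∀ x, HasGradientAt h (g x) x) {L : ℝ} (hlip : ∀ x y, ‖g x - g y‖ ≤ L * ‖x - y‖)
    (x y : E) :
    h y ≤ h x + inner ℝ (g x) (y - x) + L / 2 * ‖y - x‖ ^ 2 := by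
  set v := y - x
  let ψ : ℝ → ℝ := fun t => h (x + t • v) - t * inner ℝ (g x) v - L / 2 * ‖v‖ ^ 2 * t ^ 2
  have hψ : ∀ t, HasDerivAt ψ (inner ℝ (g (x + t • v) - g x) v - L * ‖v‖ ^ 2 * t) t := by
    intro t
    refine ((((hg (x + t • v)).hasDerivAt_comp_add_smul).sub
      ((hasDerivAt_id t).mul_const (inner ℝ (g x) v))).sub
      ((hasDerivAt_pow 2 t).const_mul (L / 2 * ‖v‖ ^ 2))).congr_deriv ?_
    rw [inner_sub_left]
    ring
  have hψ_nonpos : ∀ t ∈ interior (Icc (0 : ℝ) 1),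
      inner ℝ (g (x + t • v) - g x) v - L * ‖v‖ ^ 2 * t ≤ 0 := by
    intro t ht
    rw [interior_Icc] at ht
    refine sub_nonpos.2 ?_
    calc inner ℝ (g (x + t • v) - g x) v ≤ ‖g (x + t • v) - g x‖ * ‖v‖ := real_inner_le_norm _ _
      _ ≤ L * ‖x + t • v - x‖ * ‖v‖ := by gcongr; exact hlip _ _
      _ = L * ‖v‖ ^ 2 * t := by
        rw [add_sub_cancel_left, norm_smul, Real.norm_of_nonneg ht.1.le]; ring
  have hanti : AntitoneOn ψ (Icc 0 1) :=
    antitoneOn_of_hasDerivWithinAt_nonpos (convex_Icc 0 1)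
      (fun t _ => (hψ t).continuousAt.continuousWithinAt)
      (fun t _ => (hψ t).hasDerivWithinAt) hψ_nonpos
  have hψ01 : ψ 1 ≤ ψ 0 :=
    hanti (left_mem_Icc.2 zero_le_one) (right_mem_Icc.2 zero_le_one) zero_le_one
  simp only [ψ, v, add_sub_cancel, one_smul, zero_smul, add_zero] at hψ01
  linarith

theorem sq_norm_gradient_le_of_forall_le {h : E → ℝ} {g : E → E}
    (hg : ∀ x, HasGradientAt h (g x) x) {L : ℝ} (hL : 0 < L)
    (hlip : ∀ x y, ‖g x - g y‖ ≤ L * ‖x - y‖) {xmin : E} (hmin : ∀ y, h xmin ≤ h y) (x : E) :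
    ‖g x‖ ^ 2 ≤ 2 * L * (h x - h xmin) := by
  have hstep := le_add_inner_add_sq_of_lipschitz_gradient hg hlip x (x - L⁻¹ • g x)
  rw [sub_sub_cancel_left, inner_neg_right, real_inner_smul_right, real_inner_self_eq_norm_sq,
    norm_neg, norm_smul, mul_pow, Real.norm_eq_abs, sq_abs] at hstep
  have hdecrease : L⁻¹ * ‖g x‖ ^ 2 / 2 ≤ h x - h xmin := by
    have : L / 2 * (L⁻¹ ^ 2 * ‖g x‖ ^ 2) = L⁻¹ * ‖g x‖ ^ 2 / 2 := by field_simp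
    linarith [hmin (x - L⁻¹ • g x)]
  calc ‖g x‖ ^ 2 = 2 * L * (L⁻¹ * ‖g x‖ ^ 2 / 2) := by field_simp
    _ ≤ 2 * L * (h x - h xmin) := by gcongr

section Average

variable {F ι : Type*} [SeminormedAddCommGroup F] [NormedSpace ℝ F] (s : Finset ι) (v : ι → F)

theorem norm_inv_card_smul_sum_le {C : ℝ} (hC : 0 ≤ C) (hv : ∀ i ∈ s, ‖v i‖ ≤ C) :
    ‖(#s : ℝ)⁻¹ • ∑ i ∈ s, v i‖ ≤ C := by
  rw [norm_smul, Real.norm_of_nonneg (by positivity)]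
  calc (#s : ℝ)⁻¹ * ‖∑ i ∈ s, v i‖ ≤ (#s : ℝ)⁻¹ * (#s * C) := by
        gcongr
        exact (norm_sum_le _ _).trans (by simpa using sum_le_card_nsmul s _ C hv)
    _ ≤ C := by
        rcases s.eq_empty_or_nonempty with rfl | hs
        · simpa using hC
        · rw [inv_mul_cancel_left₀ (by simpa using hs.card_pos.ne')]

theorem sq_norm_inv_card_smul_sum_le :
    ‖(#s : ℝ)⁻¹ • ∑ i ∈ s, v i‖ ^ 2 ≤ (#s : ℝ)⁻¹ * ∑ i ∈ s, ‖v i‖ ^ 2 := by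
  rw [norm_smul, mul_pow, Real.norm_of_nonneg (by positivity)]
  calc (#s : ℝ)⁻¹ ^ 2 * ‖∑ i ∈ s, v i‖ ^ 2 ≤ (#s : ℝ)⁻¹ ^ 2 * (∑ i ∈ s, ‖v i‖) ^ 2 := by
        gcongr
        exact norm_sum_le _ _
    _ ≤ (#s : ℝ)⁻¹ ^ 2 * (#s * ∑ i ∈ s, ‖v i‖ ^ 2) := by
        gcongr
        exact sq_sum_le_card_mul_sum_sq
    _ = (#s : ℝ)⁻¹ * ∑ i ∈ s, ‖v i‖ ^ 2 := by
        rw [← mul_assoc]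
        rcases eq_or_ne (#s : ℝ) 0 with hs | hs
        · simp [hs]
        · field_simp

end Average

theorem stmt5_general {d N : ℕ}
    (f : Fin N → EuclideanSpace ℝ (Fin d) → ℝ)
    (gradf : Fin N → EuclideanSpace ℝ (Fin d) → EuclideanSpace ℝ (Fin d))
    (hgrad : ∀ i x, HasGradientAt (f i) (gradf i x) x)
    (L : ℝ) (hL : 0 < L)
    (hsmooth : ∀ i x y, ‖gradf i x - gradf i y‖ ≤ L * ‖x - y‖)
    (xstar : EuclideanSpace ℝ (Fin d))
    (hstar : ∀ y, (N : ℝ)⁻¹ * ∑ i, f i xstar ≤ (N : ℝ)⁻¹ * ∑ i, f i y)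
    (x : Fin N → EuclideanSpace ℝ (Fin d)) :
    ‖(N : ℝ)⁻¹ • ∑ i, gradf i (x i)‖ ^ 2
      ≤ (2 * L ^ 2 / N) * ∑ i, ‖x i - (N : ℝ)⁻¹ • ∑ j, x j‖ ^ 2
        + 4 * L * ((N : ℝ)⁻¹ * ∑ i, f i ((N : ℝ)⁻¹ • ∑ j, x j)
            - (N : ℝ)⁻¹ * ∑ i, f i xstar) := by
  set xbar := (N : ℝ)⁻¹ • ∑ j, x j
  set gbar := (N : ℝ)⁻¹ • ∑ i, gradf i (x i)
  set F := fun z => (N : ℝ)⁻¹ * ∑ i, f i z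
  set G := fun z => (N : ℝ)⁻¹ • ∑ i, gradf i z
  have hF : ∀ z, HasGradientAt F (G z) z := fun z =>
    (HasGradientAt.sum fun i _ => hgrad i z).const_mul _
  have hG : ∀ a b, ‖G a - G b‖ ≤ L * ‖a - b‖ := fun a b => by
    simpa [G, ← smul_sub, ← sum_sub_distrib] using
      norm_inv_card_smul_sum_le univ (fun i => gradf i a - gradf i b) (by positivity)
        fun i _ => hsmooth i a b
  have hmean : ‖G xbar‖ ^ 2 ≤ 2 * L * (F xbar - F xstar) :=
    sq_norm_gradient_le_of_forall_le hF hL hG hstar xbar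
  have hspread : ‖gbar - G xbar‖ ^ 2
      ≤ L ^ 2 / N * ∑ i, ‖x i - xbar‖ ^ 2 := by
    have := sq_norm_inv_card_smul_sum_le univ fun i => gradf i (x i) - gradf i xbar
    simp only [card_univ, Fintype.card_fin, smul_sub, sum_sub_distrib] at this
    refine this.trans ?_
    rw [div_eq_inv_mul, mul_assoc, mul_sum _ _ (L ^ 2)]
    gcongr with i
    rw [← mul_pow]
    gcongr
    exact hsmooth i _ _
  calc ‖gbar‖ ^ 2 ≤ (‖gbar - G xbar‖ + ‖G xbar‖) ^ 2 := by
        gcongr; exact norm_le_norm_sub_add _ _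
    _ ≤ 2 * (‖gbar - G xbar‖ ^ 2 + ‖G xbar‖ ^ 2) := add_sq_le
    _ ≤ _ := by
        rw [mul_div_assoc, mul_assoc 2]; linarith

/-- for convex `L`-smooth `f_i` with global minimizer `x*` of the average
`f = (1/N) Σ f_i`, one has
`‖(1/N) Σ ∇f_i(x_i)‖² ≤ (2L²/N) Σ ‖x_i − x̄‖² + 4L (f(x̄) − f(x*))`. -/
theorem stmt5 {d N : ℕ} (hN : 1 ≤ N)
    (f : Fin N → EuclideanSpace ℝ (Fin d) → ℝ)
    (gradf : Fin N → EuclideanSpace ℝ (Fin d) → EuclideanSpace ℝ (Fin d))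
    (hgrad : ∀ i x, HasGradientAt (f i) (gradf i x) x)
    (L : ℝ) (hL : 0 < L)
    (hsmooth : ∀ i x y, ‖gradf i x - gradf i y‖ ≤ L * ‖x - y‖)
    (hconv : ∀ i, ConvexOn ℝ Set.univ (f i))
    (xstar : EuclideanSpace ℝ (Fin d))
    (hstar : ∀ y, (N : ℝ)⁻¹ * ∑ i, f i xstar ≤ (N : ℝ)⁻¹ * ∑ i, f i y)
    (x : Fin N → EuclideanSpace ℝ (Fin d)) :
    ‖(N : ℝ)⁻¹ • ∑ i, gradf i (x i)‖ ^ 2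
      ≤ (2 * L ^ 2 / N) * ∑ i, ‖x i - (N : ℝ)⁻¹ • ∑ j, x j‖ ^ 2
        + 4 * L * ((N : ℝ)⁻¹ * ∑ i, f i ((N : ℝ)⁻¹ • ∑ j, x j)
            - (N : ℝ)⁻¹ * ∑ i, f i xstar) :=
  stmt5_general f gradf hgrad L hL hsmooth xstar hstar x
end

section
/- Let G ∈ ℝ^{d×N} satisfy ‖G − Ḡ‖_F² ≤ τ̂ for some τ̂ ≥ 0, and let ψ ∈ ℝ^{N×N} satisfy ψ1 = 1 and 1ᵀψ = 1ᵀ (all row sums and all column sums equal 1) together with ‖ψ − 11ᵀ/N‖_F² ≤ K for some K ≥ 0. Then ‖ G·ψ·(I − 11ᵀ/N) ‖_F² ≤ τ̂·K, where I is the N×N identity matrix. -/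
/-!
Since `ψ` is doubly stochastic, `P = 𝟙𝟙ᵀ/N` satisfies `Pψ = ψP = P² = P`, which factors
`Gψ(I - P) = (G - GP)(ψ - P)`. Submultiplicativity of the Frobenius norm then gives the bound.
-/

/-- The `N × N` matrix `𝟙𝟙ᵀ/N`, all of whose entries equal `1/N`. -/
noncomputable def avgMat (N : ℕ) : Matrix (Fin N) (Fin N) ℝ :=
  Matrix.of fun _ _ => 1 / (N : ℝ)

/-- The squared Frobenius norm `‖A‖_F² = Σ_{i,j} A_{ij}²`. -/
def frobSq {m n : ℕ} (M : Matrix (Fin m) (Fin n) ℝ) : ℝ :=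
  ∑ i, ∑ j, (M i j) ^ 2

open Matrix

section Frobenius

attribute [local instance] Matrix.frobeniusNormedAddCommGroup

theorem frobSq_eq_frobenius_norm_sq {m n : ℕ} (M : Matrix (Fin m) (Fin n) ℝ) :
    frobSq M = ‖M‖ ^ 2 := by
  rw [frobenius_norm_def, ← Real.rpow_natCast, ← Real.rpow_mul (by positivity)]
  norm_num [frobSq]

theorem frobSq_nonneg {m n : ℕ} (M : Matrix (Fin m) (Fin n) ℝ) : 0 ≤ frobSq M := by
  rw [frobSq_eq_frobenius_norm_sq]
  positivity

theorem frobSq_mul_le {l m n : ℕ} (A : Matrix (Fin l) (Fin m) ℝ) (B : Matrix (Fin m) (Fin n) ℝ) :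
    frobSq (A * B) ≤ frobSq A * frobSq B := by
  simp only [frobSq_eq_frobenius_norm_sq, ← mul_pow]
  exact pow_le_pow_left₀ (norm_nonneg _) (frobenius_norm_mul A B) 2

end Frobenius

theorem avgMat_mul_of_sum_col_eq_one {N : ℕ} {ψ : Matrix (Fin N) (Fin N) ℝ}
    (hcol : ∀ j, ∑ i, ψ i j = 1) : avgMat N * ψ = avgMat N := by
  ext i j
  simp only [mul_apply, avgMat, of_apply, ← Finset.mul_sum, hcol j, mul_one]

theorem mul_avgMat_of_sum_row_eq_one {N : ℕ} {ψ : Matrix (Fin N) (Fin N) ℝ}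
    (hrow : ∀ i, ∑ j, ψ i j = 1) : ψ * avgMat N = avgMat N := by
  ext i j
  simp only [mul_apply, avgMat, of_apply, ← Finset.sum_mul, hrow i, one_mul]

theorem avgMat_mul_self (N : ℕ) : avgMat N * avgMat N = avgMat N :=
  avgMat_mul_of_sum_col_eq_one fun j => by
    have hN : (N : ℝ) ≠ 0 := Nat.cast_ne_zero.mpr (Fin.pos j).ne'
    simp [avgMat, hN]

theorem mul_mul_one_sub_eq_sub_mul_sub {m n R : Type*} [Fintype n] [DecidableEq n] [Ring R]
    (G : Matrix m n R) {ψ P : Matrix n n R} (hPψ : P * ψ = P) (hψP : ψ * P = P) (hPP : P * P = P) :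
    G * ψ * (1 - P) = (G - G * P) * (ψ - P) := by
  simp only [Matrix.mul_sub, Matrix.sub_mul, Matrix.mul_one, Matrix.mul_assoc, hPψ, hψP, hPP]
  abel

theorem stmt9_general {d N : ℕ} (G : Matrix (Fin d) (Fin N) ℝ) (τhat : ℝ)
    (hG : frobSq (G - G * avgMat N) ≤ τhat)
    (ψ : Matrix (Fin N) (Fin N) ℝ)
    (hrow : ∀ i, ∑ j, ψ i j = 1) (hcol : ∀ j, ∑ i, ψ i j = 1)
    (K : ℝ) (hψ : frobSq (ψ - avgMat N) ≤ K) :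
    frobSq (G * ψ * (1 - avgMat N)) ≤ τhat * K := by
  rw [mul_mul_one_sub_eq_sub_mul_sub G (avgMat_mul_of_sum_col_eq_one hcol)
    (mul_avgMat_of_sum_row_eq_one hrow) (avgMat_mul_self N)]
  calc frobSq ((G - G * avgMat N) * (ψ - avgMat N))
      ≤ frobSq (G - G * avgMat N) * frobSq (ψ - avgMat N) := frobSq_mul_le _ _
    _ ≤ τhat * K := mul_le_mul hG hψ (frobSq_nonneg _) ((frobSq_nonneg _).trans hG)

/-- if `‖G − Ḡ‖_F² ≤ τ̂`, and `ψ` has all row and column sums equal to `1`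
with `‖ψ − 𝟙𝟙ᵀ/N‖_F² ≤ K`, then `‖G ψ (I − 𝟙𝟙ᵀ/N)‖_F² ≤ τ̂ K`. -/
theorem stmt9 {d N : ℕ} (G : Matrix (Fin d) (Fin N) ℝ) (τhat : ℝ) (hτ : 0 ≤ τhat)
    (hG : frobSq (G - G * avgMat N) ≤ τhat)
    (ψ : Matrix (Fin N) (Fin N) ℝ)
    (hrow : ∀ i, ∑ j, ψ i j = 1) (hcol : ∀ j, ∑ i, ψ i j = 1)
    (K : ℝ) (hK : 0 ≤ K) (hψ : frobSq (ψ - avgMat N) ≤ K) :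
    frobSq (G * ψ * (1 - avgMat N)) ≤ τhat * K :=
  stmt9_general G τhat hG ψ hrow hcol K hψ
end
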